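/- arXiv:2201.10928 — 3 statements merged into one kernel-verified Lean document; each statement's English description precedes it below -/
import Mathlib

section
/- Let d ≥ 1, h > 0, and let θ₀, θ₁, θ₂ be real numbers. Then for every r ∈ ℝᵈ, (2π)^{−d} ∫_{ℝᵈ} e^{i⟨k, r⟩} exp(−‖k‖² h²/2) (θ₀ + θ₁‖k‖² + θ₂‖k‖⁴) dk = (exp(−‖r‖²/(2h²)) / (h√(2π))^{d}) · [ θ₀ − (θ₁/h²)(‖r‖²/h² − d) + (θ₂/h⁴)(‖r‖⁴/h⁴ − 2(d+2)‖r‖²/h² + d(d+2)) ]. -/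
/-!
Write `J_n(t) = ∫ ‖k‖^{2n} e^{-t‖k‖² + i⟨r,k⟩} dk`. Differentiating under the integral sign gives
`J_n' = -J_{n+1}`, and `J_0(t) = (π/t)^{d/2} e^{-‖r‖²/(4t)}` is the Fourier transform of a Gaussian.
Hence `J_1 = -J_0'` and `J_2 = J_0''` are explicit, and the integral in question is
`θ₀ J_0 + θ₁ J_1 + θ₂ J_2` evaluated at `t = h²/2`.
-/

open MeasureTheory Real Complex
open scoped RealInnerProductSpace Nat

noncomputable section

lemma pow_mul_exp_neg_two_mul_le (n : ℕ) {a x : ℝ} (ha : 0 < a) (hx : 0 ≤ x) :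
    x ^ n * rexp (-(2 * a) * x) ≤ n ! / a ^ n * rexp (-a * x) := by
  have hpow : x ^ n ≤ n ! / a ^ n * rexp (a * x) := by
    have := pow_div_factorial_le_exp (a * x) (by positivity) n
    rw [div_le_iff₀ (by positivity), mul_pow] at this
    rw [div_mul_eq_mul_div, le_div_iff₀ (by positivity)]
    linarith
  calc x ^ n * rexp (-(2 * a) * x)
      ≤ n ! / a ^ n * rexp (a * x) * rexp (-(2 * a) * x) := by gcongr
    _ = n ! / a ^ n * rexp (-a * x) := by rw [mul_assoc, ← Real.exp_add]; ring_nf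

def gaussianFourierClosedForm (p c t : ℝ) : ℝ := (π / t) ^ p * rexp (-(c / t))

lemma hasDerivAt_gaussianFourierClosedForm (p c : ℝ) {t : ℝ} (ht : 0 < t) :
    HasDerivAt (gaussianFourierClosedForm p c)
      (gaussianFourierClosedForm p c t * (c / t ^ 2 - p / t)) t := by
  have hπt : 0 < π / t := div_pos pi_pos ht
  have hpow := ((hasDerivAt_inv ht.ne').const_mul π).rpow_const (p := p) (Or.inl hπt.ne')
  have hexp := ((hasDerivAt_inv ht.ne').const_mul c).neg.exp
  refine (hpow.mul hexp).congr_deriv ?_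
  simp only [gaussianFourierClosedForm, Pi.neg_apply, ← div_eq_mul_inv, rpow_sub_one hπt.ne']
  field_simp
  ring

lemma hasDerivAt_div_sq_sub_div (p c : ℝ) {t : ℝ} (ht : 0 < t) :
    HasDerivAt (fun s : ℝ => c / s ^ 2 - p / s) (p / t ^ 2 - 2 * c / t ^ 3) t := by
  have hfun : (fun s : ℝ => c / s ^ 2 - p / s) = fun s => c * s⁻¹ ^ 2 - p * s⁻¹ := by
    ext s
    ring
  rw [hfun]
  refine ((((hasDerivAt_inv ht.ne').pow 2).const_mul c).sub
    ((hasDerivAt_inv ht.ne').const_mul p)).congr_deriv ?_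
  have := ht.ne'
  norm_num
  field_simp
  ring

lemma inv_two_pi_pow_mul_gaussianFourierClosedForm (d : ℕ) {h : ℝ} (hh : 0 < h) (x : ℝ) :
    ((2 * π) ^ d)⁻¹ * gaussianFourierClosedForm (d / 2) (x / 4) (h ^ 2 / 2) =
      rexp (-x / (2 * h ^ 2)) / (h * √(2 * π)) ^ d := by
  have hs : √(2 * π) ^ 2 = 2 * π := sq_sqrt (by positivity)
  have hpow : (π / (h ^ 2 / 2)) ^ ((d : ℝ) / 2) = (√(2 * π) / h) ^ d := by
    rw [show π / (h ^ 2 / 2) = (√(2 * π) / h) ^ 2 by rw [div_pow, hs]; ring,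
      ← rpow_natCast_mul (by positivity), Nat.cast_ofNat, mul_div_cancel₀ _ two_ne_zero,
      rpow_natCast]
  rw [gaussianFourierClosedForm, hpow, show -(x / 4 / (h ^ 2 / 2)) = -x / (2 * h ^ 2) by ring]
  have hs0 : √(2 * π) ≠ 0 := by positivity
  have hh0 := hh.ne'
  set s := √(2 * π)
  rw [← hs, div_pow, mul_pow, ← pow_mul]
  field_simp
  ring

section

variable {V : Type*} [NormedAddCommGroup V] [InnerProductSpace ℝ V]

def gaussianFourierMomentIntegrand (n : ℕ) (r : V) (t : ℝ) (k : V) : ℂ :=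
  ((‖k‖ ^ 2) ^ n : ℝ) * cexp (-t * ‖k‖ ^ 2 + I * ⟪r, k⟫)

lemma norm_gaussianFourierMomentIntegrand (n : ℕ) (r : V) (t : ℝ) (k : V) :
    ‖gaussianFourierMomentIntegrand n r t k‖ = (‖k‖ ^ 2) ^ n * rexp (-t * ‖k‖ ^ 2) := by
  rw [gaussianFourierMomentIntegrand, norm_mul, norm_real, norm_exp,
    Real.norm_of_nonneg (by positivity)]
  congr 2
  simp [← ofReal_pow]

lemma continuous_gaussianFourierMomentIntegrand (n : ℕ) (r : V) (t : ℝ) :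
    Continuous (gaussianFourierMomentIntegrand n r t) := by
  unfold gaussianFourierMomentIntegrand
  fun_prop

lemma hasDerivAt_gaussianFourierMomentIntegrand (n : ℕ) (r k : V) (t : ℝ) :
    HasDerivAt (gaussianFourierMomentIntegrand n r · k)
      (-gaussianFourierMomentIntegrand (n + 1) r t k) t := by
  have hexp : HasDerivAt (fun s : ℝ => cexp (-s * ‖k‖ ^ 2 + I * ⟪r, k⟫))
      (cexp (-t * ‖k‖ ^ 2 + I * ⟪r, k⟫) * -‖k‖ ^ 2) t := by
    refine HasDerivAt.cexp ?_
    simpa using ((ofRealCLM.hasDerivAt (x := t)).neg.mul_const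
      ((‖k‖ : ℂ) ^ 2)).add_const (I * ⟪r, k⟫)
  refine (hexp.const_mul (((‖k‖ ^ 2) ^ n : ℝ) : ℂ)).congr_deriv ?_
  simp only [gaussianFourierMomentIntegrand]
  push_cast
  ring

variable [FiniteDimensional ℝ V] [MeasurableSpace V] [BorelSpace V]

lemma integrable_exp_neg_mul_norm_sq {t : ℝ} (ht : 0 < t) :
    Integrable fun k : V => rexp (-t * ‖k‖ ^ 2) := by
  refine Integrable.of_integral_ne_zero ?_
  rw [GaussianFourier.integral_rexp_neg_mul_sq_norm ht]
  positivity

lemma integrable_norm_sq_pow_mul_exp_neg_mul_norm_sq (n : ℕ) {t : ℝ} (ht : 0 < t) :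
    Integrable fun k : V => (‖k‖ ^ 2) ^ n * rexp (-t * ‖k‖ ^ 2) := by
  refine ((integrable_exp_neg_mul_norm_sq (half_pos ht)).const_mul (n ! / (t / 2) ^ n)).mono'
    (by fun_prop) (.of_forall fun k => ?_)
  rw [Real.norm_of_nonneg (by positivity)]
  simpa only [mul_div_cancel₀ t two_ne_zero] using
    pow_mul_exp_neg_two_mul_le n (half_pos ht) (sq_nonneg ‖k‖)

lemma integrable_gaussianFourierMomentIntegrand (n : ℕ) (r : V) {t : ℝ} (ht : 0 < t) :
    Integrable (gaussianFourierMomentIntegrand n r t) :=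
  (integrable_norm_sq_pow_mul_exp_neg_mul_norm_sq n ht).mono'
    (continuous_gaussianFourierMomentIntegrand n r t).aestronglyMeasurable
    (.of_forall fun k => (norm_gaussianFourierMomentIntegrand n r t k).le)

def gaussianFourierMoment (n : ℕ) (r : V) (t : ℝ) : ℂ :=
  ∫ k : V, gaussianFourierMomentIntegrand n r t k

lemma hasDerivAt_gaussianFourierMoment (n : ℕ) (r : V) {t : ℝ} (ht : 0 < t) :
    HasDerivAt (gaussianFourierMoment n r) (-gaussianFourierMoment (n + 1) r t) t := by
  have hbound : ∀ k : V, ∀ s ∈ Metric.ball t (t / 2),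
      ‖-gaussianFourierMomentIntegrand (n + 1) r s k‖ ≤
        (‖k‖ ^ 2) ^ (n + 1) * rexp (-(t / 2) * ‖k‖ ^ 2) := by
    intro k s hs
    rw [norm_neg, norm_gaussianFourierMomentIntegrand]
    have : t / 2 ≤ s := by
      rw [Real.ball_eq_Ioo] at hs
      linarith [hs.1]
    gcongr
  have hdom := hasDerivAt_integral_of_dominated_loc_of_deriv_le
    (Metric.ball_mem_nhds t (half_pos ht))
    (.of_forall fun s => (continuous_gaussianFourierMomentIntegrand n r s).aestronglyMeasurable)
    (integrable_gaussianFourierMomentIntegrand n r ht)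
    (continuous_gaussianFourierMomentIntegrand (n + 1) r t).neg.aestronglyMeasurable
    (.of_forall hbound) (integrable_norm_sq_pow_mul_exp_neg_mul_norm_sq (n + 1) (half_pos ht))
    (.of_forall fun k s _ => hasDerivAt_gaussianFourierMomentIntegrand n r k s)
  have hderiv := hdom.2
  rw [integral_neg] at hderiv
  exact hderiv

lemma gaussianFourierMoment_succ_eq_neg_deriv {n : ℕ} {r : V} {t : ℝ} (ht : 0 < t)
    {f : ℝ → ℝ} {f' : ℝ} (hf : ∀ s, 0 < s → gaussianFourierMoment n r s = f s)
    (hf' : HasDerivAt f f' t) :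
    gaussianFourierMoment (n + 1) r t = ((-f' : ℝ) : ℂ) := by
  have hfJ : HasDerivAt (gaussianFourierMoment n r) f' t :=
    hf'.ofReal_comp.congr_of_eventuallyEq
      (Filter.eventually_of_mem (Ioi_mem_nhds ht) fun s hs => hf s hs)
  rw [ofReal_neg, ← neg_neg (gaussianFourierMoment _ r t),
    (hasDerivAt_gaussianFourierMoment n r ht).unique hfJ]

lemma gaussianFourierMoment_zero (r : V) {t : ℝ} (ht : 0 < t) :
    gaussianFourierMoment 0 r t =
      gaussianFourierClosedForm (Module.finrank ℝ V / 2) (‖r‖ ^ 2 / 4) t := by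
  simp only [gaussianFourierMoment, gaussianFourierMomentIntegrand, pow_zero, ofReal_one, one_mul]
  rw [GaussianFourier.integral_cexp_neg_mul_sq_norm_add (by simpa using ht),
    gaussianFourierClosedForm, ofReal_mul, ofReal_cpow (by positivity), ofReal_exp]
  push_cast
  rw [I_sq]
  ring_nf

lemma gaussianFourierMoment_one (r : V) {t : ℝ} (ht : 0 < t) :
    gaussianFourierMoment 1 r t =
      ((-(gaussianFourierClosedForm (Module.finrank ℝ V / 2) (‖r‖ ^ 2 / 4) t *
        (‖r‖ ^ 2 / 4 / t ^ 2 - Module.finrank ℝ V / 2 / t)) : ℝ) : ℂ) :=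
  gaussianFourierMoment_succ_eq_neg_deriv ht (fun _ hs => gaussianFourierMoment_zero r hs)
    (hasDerivAt_gaussianFourierClosedForm _ _ ht)

lemma gaussianFourierMoment_two (r : V) {t : ℝ} (ht : 0 < t) :
    gaussianFourierMoment 2 r t =
      ((gaussianFourierClosedForm (Module.finrank ℝ V / 2) (‖r‖ ^ 2 / 4) t *
        ((‖r‖ ^ 2 / 4 / t ^ 2 - Module.finrank ℝ V / 2 / t) ^ 2 +
          (Module.finrank ℝ V / 2 / t ^ 2 - 2 * (‖r‖ ^ 2 / 4) / t ^ 3)) : ℝ) : ℂ) := by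
  rw [gaussianFourierMoment_succ_eq_neg_deriv ht (fun _ hs => gaussianFourierMoment_one r hs)
    ((hasDerivAt_gaussianFourierClosedForm _ _ ht).mul (hasDerivAt_div_sq_sub_div _ _ ht)).neg]
  congr 1
  ring

lemma integral_cexp_inner_mul_gaussian_mul_quadratic (r : V) {t : ℝ} (ht : 0 < t)
    (θ₀ θ₁ θ₂ : ℝ) :
    ∫ k : V, cexp (I * ⟪k, r⟫) *
        ((rexp (-t * ‖k‖ ^ 2) * (θ₀ + θ₁ * ‖k‖ ^ 2 + θ₂ * ‖k‖ ^ 4) : ℝ) : ℂ) =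
      θ₀ * gaussianFourierMoment 0 r t + θ₁ * gaussianFourierMoment 1 r t +
        θ₂ * gaussianFourierMoment 2 r t := by
  have hsplit (k : V) : cexp (I * ⟪k, r⟫) *
        ((rexp (-t * ‖k‖ ^ 2) * (θ₀ + θ₁ * ‖k‖ ^ 2 + θ₂ * ‖k‖ ^ 4) : ℝ) : ℂ) =
      θ₀ * gaussianFourierMomentIntegrand 0 r t k + θ₁ * gaussianFourierMomentIntegrand 1 r t k +
        θ₂ * gaussianFourierMomentIntegrand 2 r t k := by
    simp only [gaussianFourierMomentIntegrand, real_inner_comm k r, Complex.exp_add]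
    push_cast
    ring
  have hint (n : ℕ) (θ : ℝ) : Integrable fun k : V => θ * gaussianFourierMomentIntegrand n r t k :=
    (integrable_gaussianFourierMomentIntegrand n r ht).const_mul _
  simp only [hsplit, gaussianFourierMoment]
  rw [integral_add _ (hint 2 θ₂), integral_add (hint 0 θ₀) (hint 1 θ₁),
    integral_const_mul, integral_const_mul, integral_const_mul]
  exact (hint 0 θ₀).add (hint 1 θ₁)

end

end

theorem sph_lap2_gaussian_precision_function_general (d : ℕ) (h : ℝ) (hh : 0 < h)
    (θ₀ θ₁ θ₂ : ℝ) (r : EuclideanSpace ℝ (Fin d)) :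
    (((2 * Real.pi) ^ d : ℝ) : ℂ)⁻¹ *
        ∫ k : EuclideanSpace ℝ (Fin d),
          Complex.exp (Complex.I * ((inner ℝ k r : ℝ) : ℂ)) *
            ((Real.exp (-(‖k‖ ^ 2 * h ^ 2 / 2)) * (θ₀ + θ₁ * ‖k‖ ^ 2 + θ₂ * ‖k‖ ^ 4) : ℝ) : ℂ)
      = (((Real.exp (-‖r‖ ^ 2 / (2 * h ^ 2)) / (h * Real.sqrt (2 * Real.pi)) ^ d) *
            (θ₀ - (θ₁ / h ^ 2) * (‖r‖ ^ 2 / h ^ 2 - d)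
              + (θ₂ / h ^ 4) * (‖r‖ ^ 4 / h ^ 4 - 2 * ((d : ℝ) + 2) * ‖r‖ ^ 2 / h ^ 2
                  + d * ((d : ℝ) + 2)) : ℝ)) : ℂ) := by
  have ht : 0 < h ^ 2 / 2 := by positivity
  have hexponent (k : EuclideanSpace ℝ (Fin d)) :
      -(‖k‖ ^ 2 * h ^ 2 / 2) = -(h ^ 2 / 2) * ‖k‖ ^ 2 := by
    ring
  simp only [hexponent]
  rw [integral_cexp_inner_mul_gaussian_mul_quadratic r ht, gaussianFourierMoment_zero r ht,
    gaussianFourierMoment_one r ht, gaussianFourierMoment_two r ht, finrank_euclideanSpace_fin]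
  have hG := congrArg ((↑) : ℝ → ℂ)
    (inv_two_pi_pow_mul_gaussianFourierClosedForm d hh (‖r‖ ^ 2))
  push_cast at hG ⊢
  set u : ℂ := ‖r‖ ^ 2 / 4 / (h ^ 2 / 2) ^ 2 - d / 2 / (h ^ 2 / 2)
  linear_combination (θ₀ - θ₁ * u + θ₂ * (u ^ 2 + (d / 2 / (h ^ 2 / 2) ^ 2 -
    2 * (‖r‖ ^ 2 / 4) / (h ^ 2 / 2) ^ 3))) * hG

/-- Explicit form of the SPH-LAP2 precision function with the
Gaussian smoothing kernel: for every `r ∈ ℝᵈ`,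
`(2π)^{−d} ∫ e^{i⟨k,r⟩} exp(−‖k‖²h²/2)(θ₀ + θ₁‖k‖² + θ₂‖k‖⁴) dk`
equals
`(exp(−‖r‖²/(2h²))/(h√(2π))^d)[θ₀ − (θ₁/h²)(‖r‖²/h² − d)
  + (θ₂/h⁴)(‖r‖⁴/h⁴ − 2(d+2)‖r‖²/h² + d(d+2))]`. -/
theorem sph_lap2_gaussian_precision_function (d : ℕ) (hd : 1 ≤ d) (h : ℝ) (hh : 0 < h)
    (θ₀ θ₁ θ₂ : ℝ) (r : EuclideanSpace ℝ (Fin d)) :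
    (((2 * Real.pi) ^ d : ℝ) : ℂ)⁻¹ *
        ∫ k : EuclideanSpace ℝ (Fin d),
          Complex.exp (Complex.I * ((inner ℝ k r : ℝ) : ℂ)) *
            ((Real.exp (-(‖k‖ ^ 2 * h ^ 2 / 2)) * (θ₀ + θ₁ * ‖k‖ ^ 2 + θ₂ * ‖k‖ ^ 4) : ℝ) : ℂ)
      = (((Real.exp (-‖r‖ ^ 2 / (2 * h ^ 2)) / (h * Real.sqrt (2 * Real.pi)) ^ d) *
            (θ₀ - (θ₁ / h ^ 2) * (‖r‖ ^ 2 / h ^ 2 - d)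
              + (θ₂ / h ^ 4) * (‖r‖ ^ 4 / h ^ 4 - 2 * ((d : ℝ) + 2) * ‖r‖ ^ 2 / h ^ 2
                  + d * ((d : ℝ) + 2)) : ℝ)) : ℂ) :=
  sph_lap2_gaussian_precision_function_general d h hh θ₀ θ₁ θ₂ r
end

section
/- Let d ≥ 1, h > 0, and let θ₀, θ₁, θ₂ satisfy condition C1 or condition C2. Define Q*(r) = (exp(−‖r‖²/(2h²)) / (h√(2π))^{d}) · [ θ₀ − (θ₁/h²)(‖r‖²/h² − d) + (θ₂/h⁴)(‖r‖⁴/h⁴ − 2(d+2)‖r‖²/h² + d(d+2)) ]. Then Q*(0) = (1/(h√(2π))^{d}) · [ θ₀ + θ₁ d/h² + θ₂ (d² + 2d)/h⁴ ], and Q*(0) is the global maximum of Q*: Q*(r) ≤ Q*(0) for every r ∈ ℝᵈ. -/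
lemma cubic_le_exp {x : ℝ} (hx : 0 ≤ x) :
    1 + x + x ^ 2 / 2 + x ^ 3 / 6 ≤ Real.exp x := by
  have := Real.sum_le_exp_of_nonneg hx 4
  simp [Finset.sum_range_succ, Nat.factorial] at this
  nlinarith [this]

lemma key_disc (α β γ D : ℝ) (hα : 0 < α) (hγ : 0 < γ) (hD : 1 ≤ D)
    (hβ : 0 < β ∨ β ^ 2 < 4 * α * γ) :
    3 * ((α + β * D + γ * D * (D + 2)) - 8 * γ) ^ 2 ≤
      8 * (α + β * (D + 2) + γ * (D + 2) * (D + 4)) * (α + β * D + γ * D * (D + 2)) := by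
  have hs : (0:ℝ) ≤ D - 1 := by linarith
  rcases hβ with hβ | hβ
  · nlinarith [mul_pos hγ hγ, mul_pos hβ hγ, mul_pos hβ hβ, mul_pos hα hγ,
      mul_pos hα hβ, mul_pos hα hα,
      mul_nonneg (mul_pos hγ hγ).le hs, mul_nonneg (mul_pos hγ hγ).le (sq_nonneg (D-1)),
      mul_nonneg (mul_nonneg (mul_pos hγ hγ).le hs) (sq_nonneg (D-1)),
      mul_nonneg (mul_pos hγ hγ).le (sq_nonneg ((D-1)^2)),
      mul_nonneg (mul_pos hβ hγ).le hs, mul_nonneg (mul_pos hβ hγ).le (sq_nonneg (D-1)),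
      mul_nonneg (mul_nonneg (mul_pos hβ hγ).le hs) (sq_nonneg (D-1)),
      mul_nonneg (mul_pos hβ hβ).le hs, mul_nonneg (mul_pos hβ hβ).le (sq_nonneg (D-1)),
      mul_nonneg (mul_pos hα hγ).le hs, mul_nonneg (mul_pos hα hγ).le (sq_nonneg (D-1)),
      mul_nonneg (mul_pos hα hβ).le hs]
  · nlinarith [sq_nonneg (5*α + (13 + 5*(D-1))*β + (35 + 36*(D-1) + 5*(D-1)^2)*γ),
      sq_nonneg (33*β + (50 + 66*(D-1))*γ), mul_pos hγ hγ,
      mul_nonneg (mul_nonneg hs hγ.le) hγ.le]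

lemma key (α β γ D t : ℝ) (hα : 0 < α) (hγ : 0 < γ) (hD : 1 ≤ D) (ht : 0 ≤ t)
    (hβ : 0 < β ∨ β ^ 2 < 4 * α * γ) :
    Real.exp (-(t / 2)) * (α - β * (t - D) + γ * (t ^ 2 - 2 * (D + 2) * t + D * (D + 2)))
      ≤ α + β * D + γ * D * (D + 2) := by
  set c : ℝ := α + β * D + γ * D * (D + 2) with hcdef
  have hD0 : 0 < D := lt_of_lt_of_le one_pos hD
  have hc : 0 < c := by
    rcases hβ with hβ | hβ
    · have := mul_pos (mul_pos hγ hD0) (by linarith : (0:ℝ) < D + 2)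
      nlinarith [mul_pos hβ hD0]
    · nlinarith [sq_nonneg (β + 2 * γ * D), mul_pos (mul_pos hγ hγ) hD0]
  set g : ℝ := α - β * (t - D) + γ * (t ^ 2 - 2 * (D + 2) * t + D * (D + 2)) with hgdef
  rcases le_or_gt g 0 with hg | hg
  · have := Real.exp_pos (-(t / 2))
    nlinarith
  · have hexp : 1 + t / 2 + (t / 2) ^ 2 / 2 + (t / 2) ^ 3 / 6 ≤ Real.exp (t / 2) :=
      cubic_le_exp (by linarith)
    set E : ℝ := α + β * (D + 2) + γ * (D + 2) * (D + 4) with hEdef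
    have hdisc : 3 * (c - 8 * γ) ^ 2 ≤ 8 * E * c := by
      rw [hcdef, hEdef]; exact key_disc α β γ D hα hγ hD hβ
    have hq : 0 ≤ (2 * c * t + 6 * c - 48 * γ) ^ 2 + (96 * E * c - 36 * (c - 8 * γ) ^ 2) := by
      have : 0 ≤ 96 * E * c - 36 * (c - 8 * γ) ^ 2 := by linarith
      nlinarith [sq_nonneg (2 * c * t + 6 * c - 48 * γ)]
    have h48 : 0 ≤ t * ((2 * c * t + 6 * c - 48 * γ) ^ 2 + (96 * E * c - 36 * (c - 8 * γ) ^ 2)) :=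
      mul_nonneg ht hq
    have key2 : 192 * c * (c * (1 + t / 2 + (t / 2) ^ 2 / 2 + (t / 2) ^ 3 / 6) - g)
        = t * ((2 * c * t + 6 * c - 48 * γ) ^ 2 + (96 * E * c - 36 * (c - 8 * γ) ^ 2)) := by
      rw [hcdef, hgdef, hEdef]; ring
    have hX : 0 ≤ c * (1 + t / 2 + (t / 2) ^ 2 / 2 + (t / 2) ^ 3 / 6) - g := by
      by_contra hcon
      push_neg at hcon
      have h1 : 192 * c * (c * (1 + t / 2 + (t / 2) ^ 2 / 2 + (t / 2) ^ 3 / 6) - g) < 0 := by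
        have h192 : (0:ℝ) < 192 * c := by linarith
        exact mul_neg_of_pos_of_neg h192 hcon
      rw [key2] at h1
      linarith [h48]
    have h1 : g ≤ c * Real.exp (t / 2) := by
      have := mul_le_mul_of_nonneg_left hexp hc.le
      linarith
    have h2 : Real.exp (-(t / 2)) * g ≤ Real.exp (-(t / 2)) * (c * Real.exp (t / 2)) :=
      mul_le_mul_of_nonneg_left h1 (Real.exp_pos _).le
    calc Real.exp (-(t / 2)) * g ≤ Real.exp (-(t / 2)) * (c * Real.exp (t / 2)) := h2
      _ = c := by rw [← mul_assoc, mul_comm (Real.exp _) c, mul_assoc, ← Real.exp_add]; simp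

/-- The explicit SPH-LAP2 precision function equipped with the Gaussian
smoothing kernel of bandwidth `h`. -/
noncomputable def QstarGauss (d : ℕ) (h θ₀ θ₁ θ₂ : ℝ)
    (r : EuclideanSpace ℝ (Fin d)) : ℝ :=
  (Real.exp (-‖r‖ ^ 2 / (2 * h ^ 2)) / (h * Real.sqrt (2 * Real.pi)) ^ d) *
    (θ₀ - (θ₁ / h ^ 2) * (‖r‖ ^ 2 / h ^ 2 - d)
      + (θ₂ / h ^ 4) * (‖r‖ ^ 4 / h ^ 4 - 2 * ((d : ℝ) + 2) * ‖r‖ ^ 2 / h ^ 2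
          + d * ((d : ℝ) + 2)))

/-- Under condition C1 or C2, the Gaussian SPH-LAP2 precision
function satisfies `Q*(0) = (1/(h√(2π))^d)(θ₀ + θ₁ d/h² + θ₂ (d² + 2d)/h⁴)`,
and `Q*(0)` is the global maximum of `Q*`. -/
theorem sph_lap2_gaussian_precision_max_at_zero (d : ℕ) (hd : 1 ≤ d) (h : ℝ) (hh : 0 < h)
    (θ₀ θ₁ θ₂ : ℝ)
    (hC : (0 < θ₀ ∧ 0 < θ₁ ∧ 0 < θ₂) ∨
          (0 < θ₀ ∧ 0 < θ₂ ∧ θ₁ < 0 ∧ θ₁ ^ 2 < 4 * θ₀ * θ₂)) :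
    QstarGauss d h θ₀ θ₁ θ₂ (0 : EuclideanSpace ℝ (Fin d))
        = ((h * Real.sqrt (2 * Real.pi)) ^ d)⁻¹ *
          (θ₀ + θ₁ * d / h ^ 2 + θ₂ * ((d : ℝ) ^ 2 + 2 * d) / h ^ 4) ∧
    ∀ r : EuclideanSpace ℝ (Fin d),
      QstarGauss d h θ₀ θ₁ θ₂ r ≤ QstarGauss d h θ₀ θ₁ θ₂ (0 : EuclideanSpace ℝ (Fin d)) := by
  have hh' : h ≠ 0 := hh.ne'
  have hh4 : (0:ℝ) < h ^ 4 := by positivity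
  have hθ₀ : 0 < θ₀ := by rcases hC with ⟨h1,_,_⟩ | ⟨h1,_,_,_⟩ <;> exact h1
  have hγ : 0 < θ₂ / h ^ 4 := by
    rcases hC with ⟨_,_,h2⟩ | ⟨_,h2,_,_⟩ <;> exact div_pos h2 hh4
  have hβ : 0 < θ₁ / h ^ 2 ∨ (θ₁ / h ^ 2) ^ 2 < 4 * θ₀ * (θ₂ / h ^ 4) := by
    rcases hC with ⟨_,h1,_⟩ | ⟨_,_,_,h1⟩
    · exact Or.inl (div_pos h1 (by positivity))
    · right
      have e : (θ₁ / h ^ 2) ^ 2 = θ₁ ^ 2 / h ^ 4 := by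
        rw [div_pow]; ring_nf
      have e2 : 4 * θ₀ * (θ₂ / h ^ 4) = (4 * θ₀ * θ₂) / h ^ 4 := by ring
      rw [e, e2]
      gcongr
  have hD : (1:ℝ) ≤ (d:ℝ) := by exact_mod_cast hd
  have e0 : QstarGauss d h θ₀ θ₁ θ₂ (0 : EuclideanSpace ℝ (Fin d))
      = ((h * Real.sqrt (2 * Real.pi)) ^ d)⁻¹ *
        (θ₀ + θ₁ / h ^ 2 * (d:ℝ) + θ₂ / h ^ 4 * (d:ℝ) * ((d:ℝ) + 2)) := by
    simp only [QstarGauss, norm_zero, ne_eq, OfNat.ofNat_ne_zero, not_false_eq_true,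
      zero_pow, neg_zero, zero_div, Real.exp_zero, one_div]
    ring
  constructor
  · rw [e0]; ring
  · intro r
    have ht : 0 ≤ ‖r‖ ^ 2 / h ^ 2 := by positivity
    have hk := key θ₀ (θ₁ / h ^ 2) (θ₂ / h ^ 4) (d:ℝ) (‖r‖ ^ 2 / h ^ 2) hθ₀ hγ hD ht hβ
    have harg : -‖r‖ ^ 2 / (2 * h ^ 2) = -(‖r‖ ^ 2 / h ^ 2 / 2) := by ring
    have e1 : QstarGauss d h θ₀ θ₁ θ₂ r
        = ((h * Real.sqrt (2 * Real.pi)) ^ d)⁻¹ *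
          (Real.exp (-(‖r‖ ^ 2 / h ^ 2 / 2)) *
            (θ₀ - θ₁ / h ^ 2 * (‖r‖ ^ 2 / h ^ 2 - (d:ℝ))
              + θ₂ / h ^ 4 * ((‖r‖ ^ 2 / h ^ 2) ^ 2 - 2 * ((d:ℝ) + 2) * (‖r‖ ^ 2 / h ^ 2)
                  + (d:ℝ) * ((d:ℝ) + 2)))) := by
      simp only [QstarGauss, harg]
      ring
    rw [e0, e1]
    have hCpos : (0:ℝ) ≤ ((h * Real.sqrt (2 * Real.pi)) ^ d)⁻¹ := by positivity
    exact mul_le_mul_of_nonneg_left hk hCpos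
end

section
/- Let d ≥ 1, h > 0, and let θ₀, θ₁, θ₂ satisfy condition C1 or condition C2. Then the function k ↦ exp(‖k‖² h²/2) / (θ₀ + θ₁‖k‖² + θ₂‖k‖⁴) is not integrable over ℝᵈ. Consequently the reciprocal of the SPH-LAP2 spectral function is not a valid spectral density by Bochner's theorem, and the SPH-LAP2 random field based on the Gaussian smoothing kernel is not stationary for h ≠ 0. -/
open MeasureTheory

lemma exp_cube_aux {t : ℝ} (ht : 0 ≤ t) : t ^ 3 / 6 ≤ Real.exp t := by
  have h := Real.sum_le_exp_of_nonneg ht 4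
  norm_num [Finset.sum_range_succ, Nat.factorial] at h
  nlinarith [sq_nonneg t, h]

lemma key_ineq (θ₀ θ₁ θ₂ a C x : ℝ) (hapos : 0 < a) (hθ₀ : 0 < θ₀)
    (hCdef : C = θ₀ + |θ₁| + θ₂)
    (hx1 : 1 ≤ x) (hxR' : 6 * C ≤ a ^ 3 * x) :
    θ₀ + θ₁ * x + θ₂ * x ^ 2 ≤ Real.exp (a * x) := by
  have hx0 : (0:ℝ) ≤ x := by linarith
  have hx2 : (1:ℝ) ≤ x ^ 2 := by nlinarith
  have hθ₁ : θ₁ ≤ |θ₁| := le_abs_self _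
  have habs : 0 ≤ |θ₁| := abs_nonneg _
  have h1a : θ₁ * x ≤ |θ₁| * x := mul_le_mul_of_nonneg_right hθ₁ hx0
  have h1b : |θ₁| * x ≤ |θ₁| * x ^ 2 := by
    nlinarith [mul_nonneg (mul_nonneg habs hx0) (sub_nonneg.2 hx1)]
  have hθ₀x : θ₀ ≤ θ₀ * x ^ 2 := by
    nlinarith [mul_nonneg hθ₀.le (sub_nonneg.2 hx2)]
  have hqle : θ₀ + θ₁ * x + θ₂ * x ^ 2 ≤ C * x ^ 2 := by
    subst hCdef; nlinarith
  have h1 : (a * x) ^ 3 / 6 ≤ Real.exp (a * x) := exp_cube_aux (by positivity)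
  have h2 : C * x ^ 2 ≤ (a * x) ^ 3 / 6 := by
    nlinarith [mul_nonneg (sub_nonneg.2 hxR') (sq_nonneg x)]
  linarith

/-- Under condition C1 or C2 on `(θ₀, θ₁, θ₂)` and for `h > 0`,
the reciprocal of the Gaussian SPH-LAP2 spectral function, i.e. the function
`k ↦ exp(‖k‖²h²/2)/(θ₀ + θ₁‖k‖² + θ₂‖k‖⁴)`, is not integrable over `ℝᵈ`;
hence it is not a valid spectral density by Bochner's theorem and the
SPH-LAP2 random field based on the Gaussian smoothing kernel is not
stationary for `h ≠ 0`. -/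
theorem sph_lap2_reciprocal_spectral_not_integrable (d : ℕ) (hd : 1 ≤ d) (h : ℝ) (hh : 0 < h)
    (θ₀ θ₁ θ₂ : ℝ)
    (hC : (0 < θ₀ ∧ 0 < θ₁ ∧ 0 < θ₂) ∨
          (0 < θ₀ ∧ 0 < θ₂ ∧ θ₁ < 0 ∧ θ₁ ^ 2 < 4 * θ₀ * θ₂)) :
    ¬ Integrable (fun k : EuclideanSpace ℝ (Fin d) =>
        Real.exp (‖k‖ ^ 2 * h ^ 2 / 2) / (θ₀ + θ₁ * ‖k‖ ^ 2 + θ₂ * ‖k‖ ^ 4)) := by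
  intro hint
  have hθ₀ : 0 < θ₀ := by rcases hC with ⟨h0, _, _⟩ | ⟨h0, _, _, _⟩ <;> exact h0
  have hq : ∀ x : ℝ, 0 ≤ x → 0 < θ₀ + θ₁ * x + θ₂ * x ^ 2 := by
    intro x hx
    rcases hC with ⟨h0, h1, h2⟩ | ⟨h0, h2, h1, hdisc⟩
    · nlinarith
    · nlinarith [sq_nonneg (2 * θ₂ * x + θ₁)]
  obtain ⟨a, ha⟩ : ∃ a : ℝ, a = h ^ 2 / 2 := ⟨_, rfl⟩
  have hapos : 0 < a := by rw [ha]; positivity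
  obtain ⟨C, hCdef⟩ : ∃ C : ℝ, C = θ₀ + |θ₁| + θ₂ := ⟨_, rfl⟩
  have hCpos : 0 < C := by
    have : 0 ≤ |θ₁| := abs_nonneg _
    rcases hC with ⟨h0, h1, h2⟩ | ⟨h0, h2, h1, hdisc⟩ <;> rw [hCdef] <;> nlinarith
  obtain ⟨R, hR⟩ : ∃ R : ℝ, R = max 1 (6 * C / a ^ 3) := ⟨_, rfl⟩
  have hR1 : (1:ℝ) ≤ R := hR ▸ le_max_left _ _
  have hR2 : 6 * C / a ^ 3 ≤ R := hR ▸ le_max_right _ _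
  have key : ∀ k : EuclideanSpace ℝ (Fin d), R ≤ ‖k‖ →
      1 ≤ Real.exp (‖k‖ ^ 2 * h ^ 2 / 2) / (θ₀ + θ₁ * ‖k‖ ^ 2 + θ₂ * ‖k‖ ^ 4) := by
    intro k hk
    obtain ⟨x, hx⟩ : ∃ x : ℝ, x = ‖k‖ ^ 2 := ⟨_, rfl⟩
    have hx0 : (0:ℝ) ≤ x := hx ▸ sq_nonneg _
    have hkR : (1:ℝ) ≤ ‖k‖ := le_trans hR1 hk
    have hx1 : (1:ℝ) ≤ x := by rw [hx]; nlinarith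
    have hxR : 6 * C / a ^ 3 ≤ x := by
      rw [hx]
      have : R ≤ ‖k‖ ^ 2 := by nlinarith
      linarith
    have hxR' : 6 * C ≤ a ^ 3 * x := by
      rw [div_le_iff₀ (by positivity)] at hxR
      nlinarith
    have hqpos : 0 < θ₀ + θ₁ * x + θ₂ * x ^ 2 := hq x hx0
    have hmain := key_ineq θ₀ θ₁ θ₂ a C x hapos hθ₀ hCdef hx1 hxR' 
    have heq : ‖k‖ ^ 2 * h ^ 2 / 2 = a * x := by rw [ha, hx]; ring
    have hden : θ₀ + θ₁ * ‖k‖ ^ 2 + θ₂ * ‖k‖ ^ 4 = θ₀ + θ₁ * x + θ₂ * x ^ 2 := by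
      rw [hx]; ring
    rw [heq, hden, le_div_iff₀ hqpos, one_mul]
    exact hmain
  haveI : Nonempty (Fin d) := ⟨⟨0, hd⟩⟩
  haveI : Nontrivial (EuclideanSpace ℝ (Fin d)) := inferInstance
  have hcompl : volume ((Metric.ball (0 : EuclideanSpace ℝ (Fin d)) R)ᶜ) = ⊤ := by
    have hu : volume (Set.univ : Set (EuclideanSpace ℝ (Fin d))) = ⊤ :=
      measure_univ_of_isAddLeftInvariant (μ := volume)
    have hb : volume (Metric.ball (0 : EuclideanSpace ℝ (Fin d)) R) ≠ ⊤ :=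
      (measure_ball_lt_top).ne
    by_contra hc
    have hle := measure_union_le (μ := volume)
      (Metric.ball (0 : EuclideanSpace ℝ (Fin d)) R)
      ((Metric.ball (0 : EuclideanSpace ℝ (Fin d)) R)ᶜ)
    rw [Set.union_compl_self, hu] at hle
    exact (ENNReal.add_lt_top.mpr ⟨hb.lt_top, Ne.lt_top hc⟩).ne (top_le_iff.mp hle)
  have hfin := hint.measure_ge_lt_top (ε := 1) one_pos
  have hsub : (Metric.ball (0 : EuclideanSpace ℝ (Fin d)) R)ᶜ ⊆
      {k : EuclideanSpace ℝ (Fin d) |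
        1 ≤ Real.exp (‖k‖ ^ 2 * h ^ 2 / 2) / (θ₀ + θ₁ * ‖k‖ ^ 2 + θ₂ * ‖k‖ ^ 4)} := by
    intro k hk
    simp only [Metric.mem_ball, dist_zero_right, not_lt, Set.mem_compl_iff] at hk
    exact key k hk
  have hge := measure_mono (μ := volume) hsub
  rw [hcompl] at hge
  rw [top_le_iff.mp hge] at hfin
  exact lt_irrefl _ hfin
end
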